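/- arXiv:2202.03919 — 3 statements merged into one kernel-verified Lean document; each statement's English description precedes it below -/
import Mathlib

section
/- Let t ≠ 0, ε > 0, q ∈ [0,4], κ > 0, γ : ℝ → ℝ with γ(0) ≠ 0 and (1/2)|γ(0)| ≤ |γ(k)| ≤ (3/2)|γ(0)| for |k| ≤ κ. Assume 0 < ε|t|^{-1/2} ≤ (2π)^{-1/2}|γ(0)|^{1/2}κ². Then the supremum over |k| ≤ κ of ε^q (k² + ε²)^{-q/2} |sin((1/2) t ε^{-2} k⁴ γ(k))| is bounded above by (3π/2) · ε^{q/2} |t|^{q/4} / ((2π)^{1/2}|γ(0)|^{-1/2} + ε|t|^{1/2})^{q/2}. -/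
open Real

/-- If `|θ| ≤ B` and `0 ≤ a ≤ 1`, then `|sin θ| ≤ B ^ a`. -/
lemma stmt9_sin_rpow (θ B a : ℝ) (hB : |θ| ≤ B) (ha0 : 0 ≤ a) (ha1 : a ≤ 1) :
    |Real.sin θ| ≤ B ^ a := by
  have hB0 : 0 ≤ B := le_trans (abs_nonneg θ) hB
  rcases le_or_gt B 1 with h1 | h1
  · rcases eq_or_lt_of_le hB0 with h0 | h0
    · have hθ : |θ| ≤ 0 := by rw [h0]; exact hB
      have : θ = 0 := abs_eq_zero.mp (le_antisymm hθ (abs_nonneg θ))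
      rw [this, Real.sin_zero, abs_zero]
      exact Real.rpow_nonneg hB0 a
    · calc |Real.sin θ| ≤ |θ| := Real.abs_sin_le_abs
        _ ≤ B := hB
        _ = B ^ (1:ℝ) := (Real.rpow_one B).symm
        _ ≤ B ^ a := Real.rpow_le_rpow_of_exponent_ge h0 h1 ha1
  · calc |Real.sin θ| ≤ 1 := Real.abs_sin_le_one θ
      _ ≤ B ^ a := Real.one_le_rpow h1.le ha0

set_option maxHeartbeats 1600000 in
/-- upper bound in Lemma 2, estimate (1), for `0 ≤ q ≤ 4`. -/
theorem stmt9 (t ε q κ : ℝ) (γ : ℝ → ℝ) (ht : t ≠ 0) (hε : 0 < ε)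
    (hq0 : 0 ≤ q) (hq4 : q ≤ 4) (hκ : 0 < κ) (hγ0 : γ 0 ≠ 0)
    (hγlow : ∀ k : ℝ, |k| ≤ κ → (1 / 2) * |γ 0| ≤ |γ k|)
    (hγup : ∀ k : ℝ, |k| ≤ κ → |γ k| ≤ (3 / 2) * |γ 0|)
    (hsmall : ε * |t| ^ (-(1:ℝ)/2) ≤ (2 * π) ^ (-(1:ℝ)/2) * |γ 0| ^ ((1:ℝ)/2) * κ ^ 2) :
    ∀ k : ℝ, |k| ≤ κ →
      ε ^ q * (k ^ 2 + ε ^ 2) ^ (-q / 2) *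
          |Real.sin ((1 / 2) * t * (ε ^ 2)⁻¹ * k ^ 4 * γ k)|
        ≤ (3 * π / 2) * ε ^ (q / 2) * |t| ^ (q / 4) /
            ((2 * π) ^ ((1:ℝ)/2) * |γ 0| ^ (-(1:ℝ)/2) + ε * |t| ^ ((1:ℝ)/2)) ^ (q / 2) := by
  intro k hk
  have hπ : 0 < π := Real.pi_pos
  have hg : 0 < |γ 0| := abs_pos.mpr hγ0
  have ht' : 0 < |t| := abs_pos.mpr ht
  set s : ℝ := |t| ^ ((1:ℝ)/2) with hs_def
  have hs : 0 < s := Real.rpow_pos_of_pos ht' _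
  set A : ℝ := (2 * π) ^ ((1:ℝ)/2) * |γ 0| ^ (-(1:ℝ)/2) with hA_def
  have hA : 0 < A :=
    mul_pos (Real.rpow_pos_of_pos (by positivity) _) (Real.rpow_pos_of_pos hg _)
  have hD : 0 < A + ε * s := by positivity
  have hden : 0 < k ^ 2 + ε ^ 2 := by positivity
  set r : ℝ := ε * s / (A + ε * s) with hr_def
  have hr0 : 0 ≤ r := le_of_lt (div_pos (mul_pos hε hs) hD)
  set θ : ℝ := (1 / 2) * t * (ε ^ 2)⁻¹ * k ^ 4 * γ k with hθ_def
  have hs2 : s ^ 2 = |t| := by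
    rw [hs_def, ← Real.rpow_natCast (|t| ^ ((1:ℝ)/2)) 2, ← Real.rpow_mul ht'.le]
    norm_num
  have hA2 : A ^ 2 = 2 * π / |γ 0| := by
    rw [hA_def, mul_pow, ← Real.rpow_natCast ((2*π) ^ ((1:ℝ)/2)) 2,
      ← Real.rpow_mul (by positivity), ← Real.rpow_natCast (|γ 0| ^ (-(1:ℝ)/2)) 2,
      ← Real.rpow_mul hg.le, show (1:ℝ)/2 * ((2:ℕ):ℝ) = 1 by push_cast; ring,
      show (-(1:ℝ))/2 * ((2:ℕ):ℝ) = -1 by push_cast; ring,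
      Real.rpow_one, Real.rpow_neg_one]
    ring
  have hP : ε ^ q * (k ^ 2 + ε ^ 2) ^ (-q / 2)
      = (ε ^ 2 / (k ^ 2 + ε ^ 2)) ^ (q / 2) := by
    rw [Real.div_rpow (by positivity) hden.le, neg_div, Real.rpow_neg hden.le,
      ← Real.rpow_natCast ε 2, ← Real.rpow_mul hε.le,
      show ((2:ℕ):ℝ) * (q / 2) = q by push_cast; ring]
    exact (div_eq_mul_inv _ _).symm
  have hR : (3 * π / 2) * ε ^ (q / 2) * |t| ^ (q / 4) / (A + ε * s) ^ (q / 2)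
      = (3 * π / 2) * r ^ (q / 2) := by
    rw [hr_def, Real.div_rpow (by positivity) hD.le, Real.mul_rpow hε.le hs.le, hs_def,
      ← Real.rpow_mul ht'.le, show (1:ℝ)/2 * (q/2) = q/4 by ring]
    ring
  rw [hP, hR]
  clear_value s A r θ
  clear hsmall hs_def hA_def
  have hPnn : 0 ≤ (ε ^ 2 / (k ^ 2 + ε ^ 2)) ^ (q / 2) := Real.rpow_nonneg (by positivity) _
  have hrq : 0 ≤ r ^ (q / 2) := Real.rpow_nonneg hr0 _
  by_cases hcase : A * ε ≤ k ^ 2 * s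
  · -- large k: use |sin| ≤ 1
    have h1 : ε ^ 2 / (k ^ 2 + ε ^ 2) ≤ r := by
      rw [hr_def, div_le_div_iff₀ hden hD]
      linarith [mul_le_mul_of_nonneg_left hcase hε.le]
    have h2 : (ε ^ 2 / (k ^ 2 + ε ^ 2)) ^ (q / 2) ≤ r ^ (q / 2) :=
      Real.rpow_le_rpow (by positivity) h1 (by linarith)
    have h3 : |Real.sin θ| ≤ 1 := Real.abs_sin_le_one θ
    calc (ε ^ 2 / (k ^ 2 + ε ^ 2)) ^ (q / 2) * |Real.sin θ|
        ≤ r ^ (q / 2) * 1 := mul_le_mul h2 h3 (abs_nonneg _) hrq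
      _ = r ^ (q / 2) := mul_one _
      _ ≤ (3 * π / 2) * r ^ (q / 2) := by
          nlinarith [Real.pi_gt_three, hrq]
  · -- small k: use |sin θ| ≤ |θ|^(q/4)
    push_neg at hcase
    set M : ℝ := Real.sqrt (3 * |γ 0|) with hM_def
    have hM0 : 0 < M := Real.sqrt_pos.mpr (by positivity)
    have hM2 : M ^ 2 = 3 * |γ 0| := Real.sq_sqrt (by positivity)
    set c : ℝ := Real.sqrt (3 * π / 2) with hc_def
    have hc0 : 0 < c := Real.sqrt_pos.mpr (by positivity)
    have hc2 : c ^ 2 = 3 * π / 2 := Real.sq_sqrt (by positivity)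
    have hcq : c ^ (q / 2) ≤ 3 * π / 2 := by
      have h1 : c ^ (q / 2) = (3 * π / 2) ^ (q / 4) := by
        rw [hc_def, Real.sqrt_eq_rpow, ← Real.rpow_mul (by positivity),
          show (1:ℝ)/2 * (q/2) = q/4 by ring]
      rw [h1]
      calc (3 * π / 2) ^ (q / 4) ≤ (3 * π / 2) ^ (1:ℝ) :=
            Real.rpow_le_rpow_of_exponent_le (by linarith [Real.pi_gt_three]) (by linarith)
        _ = 3 * π / 2 := Real.rpow_one _
    clear_value M c
    clear hc_def hM_def
    set v : ℝ := M * s * k ^ 2 / (2 * ε) with hv_def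
    have hv0 : 0 ≤ v := by
      rw [hv_def]
      exact div_nonneg (mul_nonneg (mul_nonneg hM0.le hs.le) (sq_nonneg k)) (by linarith)
    have hv2 : v ^ 2 = 3 * |γ 0| * |t| * k ^ 4 / (4 * ε ^ 2) := by
      have h : v ^ 2 = M ^ 2 * s ^ 2 * k ^ 4 / (4 * ε ^ 2) := by rw [hv_def]; ring
      rw [h, hM2, hs2]
    -- |θ| ≤ v^2
    have hθb : |θ| ≤ v ^ 2 := by
      have habs : |θ| = (1 / 2) * |t| * (ε ^ 2)⁻¹ * k ^ 4 * |γ k| := by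
        rw [hθ_def, abs_mul, abs_mul, abs_mul, abs_mul]
        rw [abs_of_nonneg (show (0:ℝ) ≤ 1/2 by norm_num),
          abs_of_nonneg (show (0:ℝ) ≤ (ε ^ 2)⁻¹ by positivity),
          abs_of_nonneg (show (0:ℝ) ≤ k ^ 4 by positivity)]
      rw [habs, hv2]
      have hup := hγup k hk
      have hpos : (0:ℝ) ≤ (1 / 2) * |t| * (ε ^ 2)⁻¹ * k ^ 4 := by positivity
      calc (1 / 2) * |t| * (ε ^ 2)⁻¹ * k ^ 4 * |γ k|
          ≤ (1 / 2) * |t| * (ε ^ 2)⁻¹ * k ^ 4 * ((3/2) * |γ 0|) :=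
            mul_le_mul_of_nonneg_left hup hpos
        _ = 3 * |γ 0| * |t| * k ^ 4 / (4 * ε ^ 2) := by field_simp; ring
    have hsin : |Real.sin θ| ≤ (v ^ 2) ^ (q / 4) :=
      stmt9_sin_rpow θ (v ^ 2) (q / 4) hθb (by linarith) (by linarith)
    have hv2q : (v ^ 2) ^ (q / 4) = v ^ (q / 2) := by
      rw [← Real.rpow_natCast v 2, ← Real.rpow_mul hv0,
        show ((2:ℕ):ℝ) * (q / 4) = q / 2 by push_cast; ring]
    have hMA : M * A = 2 * c := by
      have h1 : 0 ≤ M * A := mul_nonneg hM0.le hA.le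
      have h2 : 0 ≤ 2 * c := by linarith
      have hsq : (M * A) ^ 2 = (2 * c) ^ 2 := by
        have e1 : (M * A) ^ 2 = M ^ 2 * A ^ 2 := by ring
        have e2 : ((2:ℝ) * c) ^ 2 = 4 * c ^ 2 := by ring
        rw [e1, e2, hM2, hA2, hc2]
        field_simp
        ring
      have := congrArg Real.sqrt hsq
      rwa [Real.sqrt_sq h1, Real.sqrt_sq h2] at this
    clear_value v
    -- the key pointwise inequality
    have hkey : ε ^ 2 / (k ^ 2 + ε ^ 2) * v ≤ c * r := by
      have hε' : ε ≠ 0 := hε.ne'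
      have hden' : k ^ 2 + ε ^ 2 ≠ 0 := hden.ne'
      have e1 : ε ^ 2 / (k ^ 2 + ε ^ 2) * v
          = ε ^ 2 * (M * s * k ^ 2) / ((k ^ 2 + ε ^ 2) * (2 * ε)) := by
        rw [hv_def]; field_simp
      have e2 : c * r = c * (ε * s) / (A + ε * s) := by rw [hr_def]; ring
      rw [e1, e2, div_le_div_iff₀ (by positivity) hD]
      have h1 : 0 ≤ M * ε ^ 3 * s * (A * ε - k ^ 2 * s) :=
        mul_nonneg (by positivity) (by linarith)
      have h2 : M * A * (ε ^ 2 * s * k ^ 2) = 2 * c * (ε ^ 2 * s * k ^ 2) := by rw [hMA]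
      have h3 : M * A * (ε ^ 4 * s) = 2 * c * (ε ^ 4 * s) := by rw [hMA]
      linarith [h1, h2, h3]
    have hstep : (ε ^ 2 / (k ^ 2 + ε ^ 2)) ^ (q / 2) * v ^ (q / 2)
        ≤ (c * r) ^ (q / 2) := by
      rw [← Real.mul_rpow (by positivity) hv0]
      exact Real.rpow_le_rpow (mul_nonneg (by positivity) hv0) hkey (by linarith)
    have hcr : (c * r) ^ (q / 2) = c ^ (q / 2) * r ^ (q / 2) :=
      Real.mul_rpow hc0.le hr0
    calc (ε ^ 2 / (k ^ 2 + ε ^ 2)) ^ (q / 2) * |Real.sin θ|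
        ≤ (ε ^ 2 / (k ^ 2 + ε ^ 2)) ^ (q / 2) * ((v ^ 2) ^ (q / 4)) :=
          mul_le_mul_of_nonneg_left hsin hPnn
      _ = (ε ^ 2 / (k ^ 2 + ε ^ 2)) ^ (q / 2) * v ^ (q / 2) := by rw [hv2q]
      _ ≤ (c * r) ^ (q / 2) := hstep
      _ = c ^ (q / 2) * r ^ (q / 2) := hcr
      _ ≤ (3 * π / 2) * r ^ (q / 2) := mul_le_mul_of_nonneg_right hcq hrq
end

section
/- Let t ≠ 0, ε > 0, q > 4, κ > 0, γ : ℝ → ℝ with (1/2)|γ(0)| ≤ |γ(k)| ≤ (3/2)|γ(0)| for |k| ≤ κ. Then the supremum over |k| ≤ κ of ε^q (k² + ε²)^{-q/2} |sin((1/2) t ε^{-2} k⁴ γ(k))| is at most 12 · q^{-q/2} · (q-4)^{q/2-2} · |γ(0)| · ε² |t|. -/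
open Real

/-!
Since `|sin x| ≤ |x|` and `|γ k| ≤ (3/2)|γ 0|`, the left side is at most
`(3/4) |t| |γ 0| ε^(q-2) · k⁴ (k² + ε²)^(-q/2)`. The last factor is bounded by the
weighted AM-GM inequality `x^a y^b ≤ a^a b^b (a+b)^(-(a+b)) (x+y)^(a+b)` with `x = k²`,
`y = ε²`, `a = 2`, `b = (q-4)/2`, which gives exactly its maximum
`16 q^(-q/2) (q-4)^(q/2-2) ε^(4-q)`.
-/

theorem rpow_mul_rpow_le_mul_add_rpow {x y a b : ℝ} (hx : 0 ≤ x) (hy : 0 ≤ y)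
    (ha : 0 < a) (hb : 0 < b) :
    x ^ a * y ^ b ≤ a ^ a * b ^ b / (a + b) ^ (a + b) * (x + y) ^ (a + b) := by
  set s := a + b with hs
  have hs0 : 0 < s := by positivity
  have hamgm : (s * x / a) ^ (a / s) * (s * y / b) ^ (b / s) ≤ x + y := by
    convert geom_mean_le_arith_mean2_weighted (div_pos ha hs0).le (div_pos hb hs0).le
      (by positivity : 0 ≤ s * x / a) (by positivity : 0 ≤ s * y / b)
      (by field_simp; exact hs.symm) using 1
    field_simp
  have hpow := rpow_le_rpow (by positivity) hamgm hs0.le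
  rw [mul_rpow (by positivity) (by positivity), ← rpow_mul (by positivity),
    ← rpow_mul (by positivity), div_mul_cancel₀ _ hs0.ne', div_mul_cancel₀ _ hs0.ne',
    div_rpow (by positivity) ha.le, div_rpow (by positivity) hb.le,
    mul_rpow hs0.le hx, mul_rpow hs0.le hy] at hpow
  have hsab : s ^ a * s ^ b = s ^ s := (rpow_add hs0 a b).symm
  rw [div_mul_eq_mul_div, le_div_iff₀ (by positivity)]
  calc x ^ a * y ^ b * s ^ s
        = a ^ a * b ^ b * (s ^ a * x ^ a / a ^ a * (s ^ b * y ^ b / b ^ b)) := by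
        rw [← hsab]; field_simp
    _ ≤ a ^ a * b ^ b * (x + y) ^ s := by gcongr

theorem pow_four_mul_add_sq_rpow_neg_le {ε q : ℝ} (hε : 0 < ε) (hq : 4 < q) (k : ℝ) :
    k ^ 4 * (k ^ 2 + ε ^ 2) ^ (-q / 2)
      ≤ 16 * q ^ (-q / 2) * (q - 4) ^ (q / 2 - 2) * ε ^ (4 - q) := by
  have hq0 : 0 < q := by linarith
  have hq4 : 0 < q - 4 := by linarith
  have hconst : (2:ℝ) ^ (2:ℝ) * ((q - 4) / 2) ^ ((q - 4) / 2) / (q / 2) ^ (q / 2)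
      = 16 * q ^ (-q / 2) * (q - 4) ^ (q / 2 - 2) := by
    have htwo : (2:ℝ) ^ (q / 2) = 2 ^ (2:ℝ) * 2 ^ ((q - 4) / 2) := by
      rw [← rpow_add two_pos]; ring_nf
    rw [div_rpow hq4.le zero_le_two, div_rpow hq0.le zero_le_two, htwo,
      show q / 2 - 2 = (q - 4) / 2 by ring, show -q / 2 = -(q / 2) by ring, rpow_neg hq0.le]
    field_simp
    norm_num
  have hamgm := rpow_mul_rpow_le_mul_add_rpow (sq_nonneg k) (sq_nonneg ε) two_pos
    (half_pos hq4)
  have hε_pow : (ε ^ 2) ^ ((q - 4) / 2) = ε ^ (q - 4) := by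
    rw [← rpow_natCast, ← rpow_mul hε.le]; ring_nf
  rw [show 2 + (q - 4) / 2 = q / 2 by ring, hconst, rpow_two, ← pow_mul,
    hε_pow] at hamgm
  have hε_inv : ε ^ (q - 4) * ε ^ (4 - q) = 1 := by
    rw [← rpow_add hε]; ring_nf; exact rpow_zero ε
  have hneg : (k ^ 2 + ε ^ 2) ^ (-q / 2) = ((k ^ 2 + ε ^ 2) ^ (q / 2))⁻¹ := by
    rw [neg_div, rpow_neg (by positivity)]
  rw [hneg, ← div_eq_mul_inv, div_le_iff₀ (by positivity)]
  calc k ^ 4 = k ^ (2 * 2) * ε ^ (q - 4) * ε ^ (4 - q) := by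
        rw [mul_assoc, hε_inv, mul_one]
    _ ≤ 16 * q ^ (-q / 2) * (q - 4) ^ (q / 2 - 2) * (k ^ 2 + ε ^ 2) ^ (q / 2) *
          ε ^ (4 - q) := by gcongr
    _ = _ := by ring

theorem stmt10_general (t ε q κ : ℝ) (γ : ℝ → ℝ) (hε : 0 < ε)
    (hq : 4 < q)
    (hγup : ∀ k : ℝ, |k| ≤ κ → |γ k| ≤ (3 / 2) * |γ 0|) :
    ∀ k : ℝ, |k| ≤ κ →
      ε ^ q * (k ^ 2 + ε ^ 2) ^ (-q / 2) *
          |Real.sin ((1 / 2) * t * (ε ^ 2)⁻¹ * k ^ 4 * γ k)|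
        ≤ 12 * q ^ (-q / 2) * (q - 4) ^ (q / 2 - 2) * |γ 0| * ε ^ (2:ℕ) * |t| := by
  intro k hk
  have hsin : |Real.sin ((1 / 2) * t * (ε ^ 2)⁻¹ * k ^ 4 * γ k)|
      ≤ (1 / 2) * |t| * (ε ^ 2)⁻¹ * k ^ 4 * ((3 / 2) * |γ 0|) :=
    calc _ ≤ |(1 / 2) * t * (ε ^ 2)⁻¹ * k ^ 4 * γ k| := abs_sin_le_abs
      _ = (1 / 2) * |t| * (ε ^ 2)⁻¹ * k ^ 4 * |γ k| := by
        simp only [abs_mul, abs_inv, abs_pow, abs_two, abs_one, abs_div,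
          abs_of_pos hε, Even.pow_abs ⟨2, rfl⟩]
      _ ≤ _ := by gcongr; exact hγup k hk
  have hε_pow : ε ^ q * (ε ^ 2)⁻¹ * ε ^ (4 - q) = ε ^ (2:ℕ) := by
    rw [mul_right_comm, ← rpow_add hε, add_sub_cancel, show (4:ℝ) = (4:ℕ) by norm_num,
      rpow_natCast]
    field_simp
  calc _ ≤ ε ^ q * (k ^ 2 + ε ^ 2) ^ (-q / 2) *
          ((1 / 2) * |t| * (ε ^ 2)⁻¹ * k ^ 4 * ((3 / 2) * |γ 0|)) := by gcongr
    _ = (3 / 4) * |t| * |γ 0| * ε ^ q * (ε ^ 2)⁻¹ *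
          (k ^ 4 * (k ^ 2 + ε ^ 2) ^ (-q / 2)) := by ring
    _ ≤ (3 / 4) * |t| * |γ 0| * ε ^ q * (ε ^ 2)⁻¹ *
          (16 * q ^ (-q / 2) * (q - 4) ^ (q / 2 - 2) * ε ^ (4 - q)) := by
        exact mul_le_mul_of_nonneg_left (pow_four_mul_add_sq_rpow_neg_le hε hq k) (by positivity)
    _ = _ := by
        linear_combination (12 * q ^ (-q / 2) * (q - 4) ^ (q / 2 - 2) * |γ 0| * |t|) * hε_pow

/-- upper bound in Lemma 2, estimate (1), for `q > 4`. -/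
theorem stmt10 (t ε q κ : ℝ) (γ : ℝ → ℝ) (ht : t ≠ 0) (hε : 0 < ε)
    (hq : 4 < q) (hκ : 0 < κ)
    (hγlow : ∀ k : ℝ, |k| ≤ κ → (1 / 2) * |γ 0| ≤ |γ k|)
    (hγup : ∀ k : ℝ, |k| ≤ κ → |γ k| ≤ (3 / 2) * |γ 0|) :
    ∀ k : ℝ, |k| ≤ κ →
      ε ^ q * (k ^ 2 + ε ^ 2) ^ (-q / 2) *
          |Real.sin ((1 / 2) * t * (ε ^ 2)⁻¹ * k ^ 4 * γ k)|
        ≤ 12 * q ^ (-q / 2) * (q - 4) ^ (q / 2 - 2) * |γ 0| * ε ^ (2:ℕ) * |t| :=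
  stmt10_general t ε q κ γ hε hq hγup
end

section
/- Lower bound in Lemma 2 (1): Let t ≠ 0, ε > 0, 0 ≤ q ≤ 4, κ > 0, γ : ℝ → ℝ continuous with (1/2)|γ(0)| ≤ |γ(k)| ≤ (3/2)|γ(0)| on [−κ, κ], γ(0) ≠ 0, and 0 < ε|t|^{-1/2} ≤ (2π)^{-1/2}|γ(0)|^{1/2}κ². Then the supremum over |k| ≤ κ of ε^q (k² + ε²)^{-q/2} |sin((1/2) t ε^{-2} k⁴ γ(k))| is at least (1/3) · ε^{q/2}|t|^{q/4} / ((2π/3)^{1/2}|γ(0)|^{-1/2} + ε|t|^{1/2})^{q/2}. -/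
/-!
By the intermediate value theorem the phase `φ(k) = t k⁴ γ(k) / (2ε²)` reaches `|φ| = π/2` at some
`ǩ ∈ [0, κ]` (the smallness assumption on `ε |t|^{-1/2}` forces `|φ(κ)| ≥ π/2`), and there
`|sin φ(ǩ)| = 1`. Since `|γ(ǩ)| ≥ |γ(0)|/2`, the equation `|φ(ǩ)| = π/2` gives
`ǩ⁴ |t| |γ(0)| ≤ 2π ε²`, which bounds `ǩ² + ε²` and hence the weight `ε^q (ǩ² + ε²)^{-q/2}` from
below; the factor `1/3` absorbs the loss `3^{q/4}` for `q ≤ 4`.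
-/

open Real Set

lemma abs_sin_eq_one_of_abs_eq_pi_div_two {x : ℝ} (hx : |x| = π / 2) : |sin x| = 1 := by
  rcases (abs_eq (by positivity)).mp hx with rfl | rfl <;> simp

lemma exists_mem_Icc_abs_eq {f : ℝ → ℝ} (hf : Continuous f) {b c : ℝ} (hb : 0 ≤ b)
    (hf0 : f 0 = 0) (hc : 0 ≤ c) (hcb : c ≤ |f b|) : ∃ a ∈ Icc 0 b, |f a| = c :=
  intermediate_value_Icc hb hf.abs.continuousOn ⟨by simpa [hf0] using hc, hcb⟩

lemma rpow_le_pow_mul_rpow_of_le_mul {x y c r : ℝ} {n : ℕ} (hx : 0 ≤ x) (hc : 1 ≤ c)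
    (hxy : x ≤ c * y) (hr : 0 ≤ r) (hrn : r ≤ n) : x ^ r ≤ c ^ n * y ^ r := by
  have hy : 0 ≤ y := nonneg_of_mul_nonneg_right (hx.trans hxy) (by linarith)
  calc x ^ r ≤ (c * y) ^ r := rpow_le_rpow hx hxy hr
    _ = c ^ r * y ^ r := mul_rpow (by linarith) hy
    _ ≤ c ^ n * y ^ r := by
      gcongr
      exact_mod_cast rpow_le_rpow_of_exponent_le hc hrn

lemma mul_sq_le_of_rpow_neg_half_le {ε T P G κ : ℝ} (hε : 0 ≤ ε) (hT : 0 < T) (hP : 0 < P)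
    (hG : 0 ≤ G)
    (h : ε * T ^ (-(1:ℝ)/2) ≤ P ^ (-(1:ℝ)/2) * G ^ ((1:ℝ)/2) * κ ^ 2) :
    P * ε ^ 2 ≤ G * κ ^ 4 * T := by
  simp only [neg_div, rpow_neg hT.le, rpow_neg hP.le, ← sqrt_eq_rpow] at h
  have h' : ε * √P ≤ √G * κ ^ 2 * √T := by
    have := mul_le_mul_of_nonneg_right h (by positivity : 0 ≤ √T * √P)
    field_simp at this
    linarith
  have := pow_le_pow_left₀ (by positivity) h' 2
  simp only [mul_pow, sq_sqrt hP.le, sq_sqrt hG, sq_sqrt hT.le] at this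
  linarith

noncomputable def phase (t ε : ℝ) (γ : ℝ → ℝ) (k : ℝ) : ℝ := (1 / 2) * t * (ε ^ 2)⁻¹ * k ^ 4 * γ k

lemma continuous_phase {γ : ℝ → ℝ} (hγ : Continuous γ) (t ε : ℝ) : Continuous (phase t ε γ) := by
  unfold phase; fun_prop

@[simp] lemma phase_zero (t ε : ℝ) (γ : ℝ → ℝ) : phase t ε γ 0 = 0 := by simp [phase]

lemma le_abs_phase {t ε c k : ℝ} {γ : ℝ → ℝ} (hε : 0 < ε) (hc : c ≤ |γ k|) :
    |t| * k ^ 4 * c / (2 * ε ^ 2) ≤ |phase t ε γ k| := by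
  have : |phase t ε γ k| = |t| * k ^ 4 * |γ k| / (2 * ε ^ 2) := by
    rw [phase, abs_mul, abs_mul, abs_mul, abs_mul, abs_inv, abs_of_pos (by positivity : 0 < ε ^ 2),
      abs_of_nonneg (by positivity : (0:ℝ) ≤ k ^ 4), abs_of_pos (by norm_num : (0:ℝ) < 1 / 2)]
    field_simp
  rw [this]
  gcongr

lemma mul_sqrt_div_le {T G c ε a : ℝ} (hT : 0 < T) (hG : 0 < G) (hc : 0 ≤ c) (hε : 0 < ε)
    (h : a ^ 4 * T * G ≤ c * ε ^ 2) :
    ε * √T / (√(c / 3) * (√G)⁻¹ + ε * √T) ≤ √3 * (ε ^ 2 / (a ^ 2 + ε ^ 2)) := by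
  have ha : a ^ 2 * √T * √G ≤ √3 * √(c / 3) * ε := by
    rw [← sqrt_mul (by norm_num), mul_div_cancel₀ _ three_ne_zero,
      ← sq_le_sq₀ (by positivity) (by positivity)]
    simpa [mul_pow, sq_sqrt, hT.le, hG.le, hc, ← pow_mul] using h
  have h3 := mul_le_mul_of_nonneg_right (one_le_sqrt.2 (by norm_num : (1:ℝ) ≤ 3))
    (by positivity : 0 ≤ ε ^ 2 * √T * √G)
  rw [mul_div_assoc', div_le_div_iff₀ (by positivity) (by positivity)]
  field_simp
  nlinarith

lemma le_rpow_mul_rpow_neg_of_pow_four_le {T G c ε a q : ℝ} (hT : 0 < T) (hG : 0 < G)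
    (hc : 0 ≤ c) (hε : 0 < ε) (hq0 : 0 ≤ q) (hq4 : q ≤ 4) (h : a ^ 4 * T * G ≤ c * ε ^ 2) :
    (1 / 3) * ε ^ (q / 2) * T ^ (q / 4) /
        ((c / 3) ^ ((1:ℝ)/2) * G ^ (-(1:ℝ)/2) + ε * T ^ ((1:ℝ)/2)) ^ (q / 2)
      ≤ ε ^ q * (a ^ 2 + ε ^ 2) ^ (-q / 2) := by
  calc _ = (1 / 3) * (ε * √T / (√(c / 3) * (√G)⁻¹ + ε * √T)) ^ (q / 2) := by
        have hsqrt : ∀ x : ℝ, x ^ ((1:ℝ) / 2) = √x := fun x => (sqrt_eq_rpow x).symm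
        have hTq : T ^ (q / 4) = √T ^ (q / 2) := by
          rw [sqrt_eq_rpow, ← rpow_mul hT.le]; ring_nf
        rw [neg_div, rpow_neg hG.le, hTq]
        simp only [hsqrt]
        rw [div_rpow (by positivity) (by positivity), mul_rpow hε.le (by positivity)]
        ring
    _ ≤ (ε ^ 2 / (a ^ 2 + ε ^ 2)) ^ (q / 2) := by
        have := rpow_le_pow_mul_rpow_of_le_mul (r := q / 2) (n := 2) (by positivity)
          (one_le_sqrt.2 (by norm_num)) (mul_sqrt_div_le hT hG hc hε h)
          (by positivity) (by push_cast; linarith)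
        rw [sq_sqrt (by norm_num)] at this
        linarith
    _ = ε ^ q * (a ^ 2 + ε ^ 2) ^ (-q / 2) := by
        rw [div_rpow (by positivity) (by positivity), neg_div, rpow_neg (by positivity),
          ← rpow_natCast_mul hε.le]
        push_cast
        ring_nf

lemma bddAbove_image_rpow_mul_abs_sin {g : ℝ → ℝ} (hg : Continuous g) {ε : ℝ} (hε : ε ≠ 0)
    (q a b : ℝ) :
    BddAbove ((fun k : ℝ => ε ^ q * (k ^ 2 + ε ^ 2) ^ (-q / 2) * |sin (g k)|) '' Icc a b) :=
  isCompact_Icc.bddAbove_image <| Continuous.continuousOn <|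
    (continuous_const.mul ((by fun_prop : Continuous fun k : ℝ => k ^ 2 + ε ^ 2).rpow_const
      fun k => Or.inl (by positivity))).mul (by fun_prop)

theorem stmt17_general (t ε q κ : ℝ) (γ : ℝ → ℝ) (ht : t ≠ 0) (hε : 0 < ε)
    (hq0 : 0 ≤ q) (hq4 : q ≤ 4) (hκ : 0 < κ) (hγcont : Continuous γ) (hγ0 : γ 0 ≠ 0)
    (hγlow : ∀ k : ℝ, |k| ≤ κ → (1 / 2) * |γ 0| ≤ |γ k|)
    (hsmall : ε * |t| ^ (-(1:ℝ)/2) ≤ (2 * π) ^ (-(1:ℝ)/2) * |γ 0| ^ ((1:ℝ)/2) * κ ^ 2) :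
    (1 / 3) * ε ^ (q / 2) * |t| ^ (q / 4) /
        ((2 * π / 3) ^ ((1:ℝ)/2) * |γ 0| ^ (-(1:ℝ)/2) + ε * |t| ^ ((1:ℝ)/2)) ^ (q / 2)
      ≤ sSup ((fun k : ℝ =>
          ε ^ q * (k ^ 2 + ε ^ 2) ^ (-q / 2) *
            |Real.sin ((1 / 2) * t * (ε ^ 2)⁻¹ * k ^ 4 * γ k)|) '' Set.Icc (-κ) κ) := by
  have hT : 0 < |t| := abs_pos.mpr ht
  have hG : 0 < |γ 0| := abs_pos.mpr hγ0
  have hκ4 := mul_sq_le_of_rpow_neg_half_le hε.le hT (by positivity) hG.le hsmall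
  obtain ⟨a, ⟨ha0, haκ⟩, ha⟩ : ∃ a ∈ Icc 0 κ, |phase t ε γ a| = π / 2 := by
    refine exists_mem_Icc_abs_eq (continuous_phase hγcont t ε) hκ.le (phase_zero t ε γ)
      (by positivity) ((le_abs_phase hε (hγlow κ (abs_of_pos hκ).le)).trans' ?_)
    rw [le_div_iff₀ (by positivity)]
    linarith
  have ha4 : a ^ 4 * |t| * |γ 0| ≤ 2 * π * ε ^ 2 := by
    have := (le_abs_phase hε (hγlow a (by rwa [abs_of_nonneg ha0]))).trans ha.le
    rw [div_le_iff₀ (by positivity)] at this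
    linarith
  calc _ ≤ ε ^ q * (a ^ 2 + ε ^ 2) ^ (-q / 2) :=
        le_rpow_mul_rpow_neg_of_pow_four_le hT hG (by positivity) hε hq0 hq4 ha4
    _ = ε ^ q * (a ^ 2 + ε ^ 2) ^ (-q / 2) * |sin (phase t ε γ a)| := by
        rw [abs_sin_eq_one_of_abs_eq_pi_div_two ha, mul_one]
    _ ≤ _ := le_csSup (bddAbove_image_rpow_mul_abs_sin (continuous_phase hγcont t ε) hε.ne' q _ _)
        ⟨a, ⟨by linarith, haκ⟩, rfl⟩

/-- lower bound in Lemma 2, estimate (1), for `0 ≤ q ≤ 4`: the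
supremum over `|k| ≤ κ` of `ε^q (k² + ε²)^{-q/2} |sin((1/2) t ε⁻² k⁴ γ(k))|` is
at least `(1/3) ε^{q/2} |t|^{q/4} / ((2π/3)^{1/2} |γ(0)|^{-1/2} + ε |t|^{1/2})^{q/2}`. -/
theorem stmt17 (t ε q κ : ℝ) (γ : ℝ → ℝ) (ht : t ≠ 0) (hε : 0 < ε)
    (hq0 : 0 ≤ q) (hq4 : q ≤ 4) (hκ : 0 < κ) (hγcont : Continuous γ) (hγ0 : γ 0 ≠ 0)
    (hγlow : ∀ k : ℝ, |k| ≤ κ → (1 / 2) * |γ 0| ≤ |γ k|)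
    (hγup : ∀ k : ℝ, |k| ≤ κ → |γ k| ≤ (3 / 2) * |γ 0|)
    (hsmall : ε * |t| ^ (-(1:ℝ)/2) ≤ (2 * π) ^ (-(1:ℝ)/2) * |γ 0| ^ ((1:ℝ)/2) * κ ^ 2) :
    (1 / 3) * ε ^ (q / 2) * |t| ^ (q / 4) /
        ((2 * π / 3) ^ ((1:ℝ)/2) * |γ 0| ^ (-(1:ℝ)/2) + ε * |t| ^ ((1:ℝ)/2)) ^ (q / 2)
      ≤ sSup ((fun k : ℝ =>
          ε ^ q * (k ^ 2 + ε ^ 2) ^ (-q / 2) *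
            |Real.sin ((1 / 2) * t * (ε ^ 2)⁻¹ * k ^ 4 * γ k)|) '' Set.Icc (-κ) κ) :=
  stmt17_general t ε q κ γ ht hε hq0 hq4 hκ hγcont hγ0 hγlow hsmall
end
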